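/- Let H be a modular hyperplane of a matroid M and let (F,F') be a modular cover of M with F' ⊆ H. If F' ≠ H, then (F∩H, F'∩H) is a modular cover of the restriction M|H. -/

import Mathlib

open Set

namespace Matroid

variable {α : Type*} {β : Type*}

/-- The rank of a set in a matroid: the supremum of sizes of independent subsets. -/
noncomputable def mRank (M : Matroid α) (X : Set α) : ℕ :=
  sSup {n : ℕ | ∃ I, M.Indep I ∧ I ⊆ X ∧ I.ncard = n}

/-- The rank of a matroid. -/
noncomputable def mRk (M : Matroid α) : ℕ := M.mRank M.E

/-- A flat `F` is modular if `r F + r F' = r (F ∪ F') + r (F ∩ F')` for every flat `F'`. -/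
def IsModularFlat (M : Matroid α) (F : Set α) : Prop :=
  M.IsFlat F ∧ ∀ F', M.IsFlat F' →
    M.mRank F + M.mRank F' = M.mRank (F ∪ F') + M.mRank (F ∩ F')

/-- A proper flat is a flat other than the ground set. -/
def IsProperFlat (M : Matroid α) (F : Set α) : Prop := M.IsFlat F ∧ F ≠ M.E

/-- A vertical cover is a pair of proper flats whose union is the ground set. -/
def VerticalCover (M : Matroid α) (F F' : Set α) : Prop :=
  M.IsProperFlat F ∧ M.IsProperFlat F' ∧ F ∪ F' = M.E

/-- A modular cover is a vertical cover by two modular flats. -/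
def ModularCover (M : Matroid α) (F F' : Set α) : Prop :=
  M.VerticalCover F F' ∧ M.IsModularFlat F ∧ M.IsModularFlat F'

/-- A matroid is round if it has no vertical cover. -/
def Round (M : Matroid α) : Prop := ∀ F F', ¬ M.VerticalCover F F'

/-- A subset of the ground set is round if the restriction to it is round. -/
def RoundSet (M : Matroid α) (X : Set α) : Prop := X ⊆ M.E ∧ (M ↾ X).Round

/-- A rotunda is a maximal round flat. -/
def Rotunda (M : Matroid α) (R : Set α) : Prop :=
  M.IsFlat R ∧ M.RoundSet R ∧ ∀ R', M.IsFlat R' → M.RoundSet R' → R ⊆ R' → R' = R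

/-- A matroid of rank `r` is supersolvable if there is a chain of modular flats
`F 0 ⊆ F 1 ⊆ ⋯ ⊆ F r` with `r (F i) = i` for each `i`. -/
def Supersolvable (M : Matroid α) : Prop :=
  ∃ F : ℕ → Set α, (∀ i ≤ M.mRk, M.IsModularFlat (F i) ∧ M.mRank (F i) = i) ∧
    ∀ i < M.mRk, F i ⊆ F (i + 1)

/-- A matroid is saturated if every round flat is modular. -/
def Saturated (M : Matroid α) : Prop :=
  ∀ F, M.IsFlat F → M.RoundSet F → M.IsModularFlat F

/-- A circuit: a minimal dependent subset of the ground set. -/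
def Circ (M : Matroid α) (C : Set α) : Prop :=
  C ⊆ M.E ∧ ¬ M.Indep C ∧ ∀ D ⊂ C, M.Indep D

/-- A matroid is connected if it is non-empty and every two distinct elements lie in a
common circuit. -/
def ConnectedM (M : Matroid α) : Prop :=
  M.E.Nonempty ∧ ∀ x ∈ M.E, ∀ y ∈ M.E, x = y ∨ ∃ C, M.Circ C ∧ x ∈ C ∧ y ∈ C

/-- A hyperplane: a flat of rank `r M - 1`. -/
def IsHyperplane (M : Matroid α) (H : Set α) : Prop :=
  M.IsFlat H ∧ M.mRank H + 1 = M.mRk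

/-- The union of the projections `P_H(x, y) = H ∩ cl (x ∪ y)` onto the modular hyperplane `H`,
taken over all pairs of distinct rank-one flats `x = cl {a}`, `y = cl {b}` spanned by
elements `a, b` of `X`. -/
def projUnion (M : Matroid α) (H X : Set α) : Set α :=
  ⋃ a ∈ X, ⋃ b ∈ X, ⋃ (_ : M.closure {a} ≠ M.closure {b}), H ∩ M.closure {a, b}

/-- Two elements are related if they are equal or lie in a common circuit; the connected
components of a matroid are the restrictions to the equivalence classes of this relation. -/
def connRel (M : Matroid α) (x y : α) : Prop :=
  x = y ∨ ∃ C, M.Circ C ∧ x ∈ C ∧ y ∈ C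

/-- The rotunda graph of a matroid: vertices are the rotunda; two rotunda are adjacent if
they intersect and there is a modular cover separating them at their intersection. -/
def rotundaGraph (M : Matroid α) : SimpleGraph {R : Set α // M.Rotunda R} where
  Adj R₁ R₂ := R₁ ≠ R₂ ∧ (R₁.1 ∩ R₂.1).Nonempty ∧
    ∃ F₁ F₂, M.ModularCover F₁ F₂ ∧ R₁.1 ⊆ F₁ ∧ R₂.1 ⊆ F₂ ∧ F₁ ∩ F₂ = R₁.1 ∩ R₂.1
  symm := by
    constructor
    rintro a b ⟨hne, hint, F₁, F₂, ⟨⟨hp1, hp2, hu⟩, hm1, hm2⟩, h1, h2, hi⟩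
    refine ⟨hne.symm, by rwa [Set.inter_comm], F₂, F₁,
      ⟨⟨hp2, hp1, by rwa [Set.union_comm]⟩, hm2, hm1⟩, h2, h1, ?_⟩
    rw [Set.inter_comm, hi, Set.inter_comm]
  loopless := ⟨fun a h => h.1 rfl⟩

/-- A rotunda tree of `M`: a tree on the rotunda of `M` such that for each element `x` of the
ground set, the rotunda containing `x` induce a (nonempty) subtree. -/
def IsRotundaTree (M : Matroid α) (T : SimpleGraph {R : Set α // M.Rotunda R}) : Prop :=
  T.IsTree ∧ ∀ x ∈ M.E, (T.induce {t : {R : Set α // M.Rotunda R} | x ∈ t.1}).Connected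

/-- A legitimate weighting of `M`: zero on the empty set, and strictly monotone under proper
inclusion on the set consisting of `∅` and the pairwise intersections of distinct rotunda. -/
def LegitimateWeighting (M : Matroid α) (σ : Set α → ℕ) : Prop :=
  σ ∅ = 0 ∧
  ∀ X X' : Set α,
    (X = ∅ ∨ ∃ R R', M.Rotunda R ∧ M.Rotunda R' ∧ R ≠ R' ∧ X = R ∩ R') →
    (X' = ∅ ∨ ∃ R R', M.Rotunda R ∧ M.Rotunda R' ∧ R ≠ R' ∧ X' = R ∩ R') →
    X ⊂ X' → σ X < σ X'

/-- The total weight of a graph on the rotunda of `M`, where the edge joining rotunda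
`R` and `R'` gets weight `σ (R ∩ R')`. -/
noncomputable def treeWeight {M : Matroid α} (σ : Set α → ℕ)
    (T : SimpleGraph {R : Set α // M.Rotunda R}) : ℕ :=
  ∑ᶠ e ∈ T.edgeSet,
    Sym2.lift ⟨fun a b => σ (a.1 ∩ b.1), fun a b => by simp [Set.inter_comm]⟩ e

/-- A tree-decomposition of a matroid: a tree together with bags covering the ground set. -/
def IsTreeDecomp (M : Matroid α) (T : SimpleGraph β) (τ : β → Set α) : Prop :=
  T.IsTree ∧ ∀ x ∈ M.E, ∃ t, x ∈ τ t

/-- The node-width of a node `t` in a tree-decomposition `(T, τ)` of `M`: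
`(Σ_i r (τ t ∪ ⋃_{k ≠ i} F_k)) − (d − 1) · r M`, where `F_1, …, F_d` are the unions of the
bags over the connected components of `T − t`. -/
noncomputable def nodeWidth (M : Matroid α) (T : SimpleGraph β) (τ : β → Set α) (t : β) : ℤ :=
  (∑ᶠ c : (T.induce {s : β | s ≠ t}).ConnectedComponent,
      (M.mRank (τ t ∪ ⋃ (s : {s : β // s ≠ t})
        (_ : (T.induce {s : β | s ≠ t}).connectedComponentMk s ≠ c), τ s.1) : ℤ))
    - ((Nat.card (T.induce {s : β | s ≠ t}).ConnectedComponent : ℤ) - 1) * (M.mRk : ℤ)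

/-- The width of a tree-decomposition: the maximum node-width. -/
noncomputable def decompWidth (M : Matroid α) (T : SimpleGraph β) (τ : β → Set α) : ℤ :=
  sSup (Set.range (M.nodeWidth T τ))

/-- The tree-width of a matroid: the minimum width of a (finite) tree-decomposition. -/
noncomputable def treeWidth (M : Matroid α) : ℕ :=
  sInf {n : ℕ | ∃ (β : Type) (T : SimpleGraph β) (τ : β → Set α),
    Finite β ∧ M.IsTreeDecomp T τ ∧ ∀ t, M.nodeWidth T τ t ≤ (n : ℤ)}

end Matroid

namespace SimpleGraph

/-- A graph is chordal if every cycle with at least four edges has a chord: an edge of the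
graph joining two vertices of the cycle that is not an edge of the cycle. -/
def IsChordal {V : Type*} (G : SimpleGraph V) : Prop :=
  ∀ ⦃v : V⦄ (w : G.Walk v v), w.IsCycle → 4 ≤ w.length →
    ∃ x y, x ∈ w.support ∧ y ∈ w.support ∧ G.Adj x y ∧ s(x, y) ∉ w.edges

/-- A maximal clique of a graph. -/
def MaxClique {V : Type*} (G : SimpleGraph V) (C : Set V) : Prop :=
  G.IsClique C ∧ ∀ D, G.IsClique D → C ⊆ D → D = C

/-- The reduced clique graph of a graph: vertices are the maximal cliques; two maximal
cliques are adjacent if they intersect and every walk from one side to the other passes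
through their intersection. -/
def reducedCliqueGraph {V : Type*} (G : SimpleGraph V) :
    SimpleGraph {C : Set V // G.MaxClique C} where
  Adj C₁ C₂ := C₁ ≠ C₂ ∧ (C₁.1 ∩ C₂.1).Nonempty ∧
    ∀ u ∈ C₁.1 \ C₂.1, ∀ v ∈ C₂.1 \ C₁.1, ∀ p : G.Walk u v,
      ∃ z ∈ p.support, z ∈ C₁.1 ∩ C₂.1
  symm := by
    constructor
    rintro a b ⟨hne, hint, hsep⟩
    refine ⟨hne.symm, by rwa [Set.inter_comm], fun u hu v hv p => ?_⟩
    obtain ⟨z, hz, hz2⟩ := hsep v hv u hu p.reverse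
    refine ⟨z, ?_, by rwa [Set.inter_comm]⟩
    simpa [SimpleGraph.Walk.support_reverse] using hz
  loopless := ⟨fun a h => h.1 rfl⟩

end SimpleGraph

/-! For a flat `X ⊆ E` and a flat `G ⊆ X`, put `K = cl ((F ∩ X) ∪ G) ⊆ X`. Then `F ∩ K = F ∩ X`
and `cl (F ∪ K) = cl (F ∪ G)`, so subtracting the modularity identity of `F` with `G` from the
one with `K` gives the identity of `F ∩ X` with `G`: modular flats stay modular when cut down to
a flat. For `X = H` both `F ∩ H` and `F' ∩ H = F'` are proper in `H`, since `H ⊆ F` would force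
`F = F ∪ F' = E`. -/

namespace Matroid

variable {α : Type*} {M : Matroid α} {F F' G X R : Set α}

lemma coe_mRank [M.RankFinite] (X : Set α) : (M.mRank X : ℕ∞) = M.eRk X := by
  obtain ⟨I, hI⟩ := M.exists_isBasis' X
  have hIfin : I.Finite := hI.indep.finite
  have hmax : IsGreatest {n : ℕ | ∃ J, M.Indep J ∧ J ⊆ X ∧ J.ncard = n} I.ncard := by
    refine ⟨⟨I, hI.indep, hI.subset, rfl⟩, ?_⟩
    rintro _ ⟨J, hJ, hJX, rfl⟩
    have hle : J.encard ≤ I.encard := hI.encard_eq_eRk ▸ hJ.encard_le_eRk_of_subset hJX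
    rwa [← hIfin.cast_ncard_eq, ← hJ.finite.cast_ncard_eq, Nat.cast_le] at hle
  rw [mRank, hmax.csSup_eq, hIfin.cast_ncard_eq, hI.encard_eq_eRk]

lemma mRank_closure [M.RankFinite] (X : Set α) : M.mRank (M.closure X) = M.mRank X :=
  ENat.natCast_inj.1 <| by rw [coe_mRank, coe_mRank, eRk_closure_eq]

lemma mRank_union_closure_right [M.RankFinite] (X Y : Set α) :
    M.mRank (X ∪ M.closure Y) = M.mRank (X ∪ Y) :=
  ENat.natCast_inj.1 <| by rw [coe_mRank, coe_mRank, eRk_union_closure_right_eq]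

lemma restrict_mRank_of_subset [M.RankFinite] (h : X ⊆ R) : (M ↾ R).mRank X = M.mRank X :=
  ENat.natCast_inj.1 <| by rw [coe_mRank, coe_mRank, restrict_eRk_eq _ h]

lemma IsFlat.inter (hF : M.IsFlat F) (hG : M.IsFlat G) : M.IsFlat (F ∩ G) :=
  isFlat_iff_closure_eq.2 <| Subset.antisymm
    (subset_inter ((M.closure_subset_closure inter_subset_left).trans hF.closure.subset)
      ((M.closure_subset_closure inter_subset_right).trans hG.closure.subset))
    (M.subset_closure _ (inter_subset_left.trans hF.subset_ground))

lemma IsFlat.isFlat_restrict_iff (hX : M.IsFlat X) : (M ↾ X).IsFlat G ↔ M.IsFlat G ∧ G ⊆ X := by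
  refine ⟨fun hG ↦ ?_, fun ⟨hG, hGX⟩ ↦ ?_⟩
  · have hGX : G ⊆ X := hG.subset_ground
    have hclX : M.closure G ⊆ X := hX.closure ▸ M.closure_subset_closure hGX
    rw [isFlat_iff_closure_eq, restrict_closure_eq _ hGX hX.subset_ground,
      inter_eq_left.2 hclX] at hG
    exact ⟨isFlat_iff_closure_eq.2 hG, hGX⟩
  · rw [isFlat_iff_closure_eq, restrict_closure_eq _ hGX hX.subset_ground, hG.closure,
      inter_eq_left.2 hGX]

lemma IsModularFlat.inter_restrict [M.RankFinite] (hF : M.IsModularFlat F) (hX : M.IsFlat X) :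
    (M ↾ X).IsModularFlat (F ∩ X) := by
  refine ⟨hX.isFlat_restrict_iff.2 ⟨hF.1.inter hX, inter_subset_right⟩, fun G hG ↦ ?_⟩
  obtain ⟨hG, hGX⟩ := hX.isFlat_restrict_iff.1 hG
  have hFXG : F ∩ X ∪ G ⊆ X := union_subset inter_subset_right hGX
  set K := M.closure (F ∩ X ∪ G)
  have hKX : K ⊆ X := hX.closure ▸ M.closure_subset_closure hFXG
  have hFK : F ∩ K = F ∩ X := (inter_subset_inter_right F hKX).antisymm <|
    subset_inter inter_subset_left <|
      subset_union_left.trans (M.subset_closure _ (hFXG.trans hX.subset_ground))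
  have hspan : M.mRank (F ∪ K) = M.mRank (F ∪ G) := by
    rw [mRank_union_closure_right, ← union_assoc, union_eq_left.2 inter_subset_left]
  have hmodK := hF.2 K (M.isFlat_closure _)
  rw [hFK, hspan, mRank_closure] at hmodK
  have hmodG := hF.2 G hG
  rw [restrict_mRank_of_subset inter_subset_right, restrict_mRank_of_subset hGX,
    restrict_mRank_of_subset hFXG, restrict_mRank_of_subset (inter_subset_right.trans hGX),
    inter_assoc, inter_eq_right.2 hGX]
  omega

lemma ModularCover.inter_restrict [M.RankFinite] (h : M.ModularCover F F') (hX : M.IsFlat X)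
    (hXF : ¬ X ⊆ F) (hXF' : ¬ X ⊆ F') : (M ↾ X).ModularCover (F ∩ X) (F' ∩ X) := by
  obtain ⟨⟨-, -, hcover⟩, hFmod, hF'mod⟩ := h
  have hFX := hFmod.inter_restrict hX
  have hF'X := hF'mod.inter_restrict hX
  refine ⟨⟨⟨hFX.1, ?_⟩, ⟨hF'X.1, ?_⟩, ?_⟩, hFX, hF'X⟩
  · rwa [restrict_ground_eq, Ne, inter_eq_right]
  · rwa [restrict_ground_eq, Ne, inter_eq_right]
  · rw [restrict_ground_eq, ← union_inter_distrib_right, hcover,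
      inter_eq_right.2 hX.subset_ground]

end Matroid

open Matroid

theorem modularCover_restrict_hyperplane_general {α : Type*} (M : Matroid α) [M.Finite]
    (H F F' : Set α) (hH : M.IsHyperplane H)
    (hmc : M.ModularCover F F') (hsub : F' ⊆ H) (hne : F' ≠ H) :
    (M ↾ H).ModularCover (F ∩ H) (F' ∩ H) := by
  obtain ⟨⟨hF, hFE⟩, -, hcover⟩ := hmc.1
  have hHF : ¬ H ⊆ F := fun hHF ↦ hFE <| hF.subset_ground.antisymm <|
    hcover ▸ union_subset subset_rfl (hsub.trans hHF)
  exact hmc.inter_restrict hH.1 hHF fun hHF' ↦ hne (hsub.antisymm hHF')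

/-- Let `H` be a modular hyperplane of `M` and `(F, F')` a modular cover of `M` with
`F' ⊆ H`. If `F' ≠ H`, then `(F ∩ H, F' ∩ H)` is a modular cover of `M ↾ H`. -/
theorem modularCover_restrict_hyperplane {α : Type*} (M : Matroid α) [M.Finite]
    (H F F' : Set α) (hH : M.IsHyperplane H) (hmod : M.IsModularFlat H)
    (hmc : M.ModularCover F F') (hsub : F' ⊆ H) (hne : F' ≠ H) :
    (M ↾ H).ModularCover (F ∩ H) (F' ∩ H) :=
  modularCover_restrict_hyperplane_general M H F F' hH hmc hsub hne
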